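/- Let f ∈ ℝ[x,y] have at most t nonzero terms. Then the univariate polynomial g(x) = f(x, x+1) either is identically zero or has at most 2t-2 positive real roots counted with multiplicity. -/

import Mathlib

/-!
Write `f = ∑ cₘ x^{m₀} y^{m₁}`, so that `g = ∑ cₘ x^{m₀} (x + 1)^{m₁}`. Multiplying by `x + c` with
`c > 0` never increases the number of sign changes of the coefficient sequence, since every new
coefficient is a positive combination of two consecutive old ones. Factoring out `(x + 1)^{min m₁}`
leaves one monomial plus a sum of `t - 1` terms of the same shape, and adding a monomial changes a
single coefficient, hence adds at most two sign changes. By induction `g` has at most `2t - 2` sign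
changes, and Descartes' rule of signs bounds its positive roots by that number.
-/

namespace List

section LinearOrder
variable {R : Type*} [Zero R] [LinearOrder R]

/-- Sign changes along `l` when the last nonzero entry read before `l` had sign `σ`. -/
def signChangesFrom : SignType → List R → ℕ
  | _, [] => 0
  | σ, a :: l => if σ * SignType.sign a = -1 then signChangesFrom (-σ) l + 1
      else signChangesFrom σ l

@[simp] lemma signChangesFrom_nil (σ : SignType) : signChangesFrom σ ([] : List R) = 0 := rfl

lemma signChangesFrom_cons (σ : SignType) (a : R) (l : List R) :
    signChangesFrom σ (a :: l) = if σ * SignType.sign a = -1 then signChangesFrom (-σ) l + 1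
      else signChangesFrom σ l := rfl

@[simp] lemma signChangesFrom_cons_zero (σ : SignType) (l : List R) :
    signChangesFrom σ (0 :: l) = signChangesFrom σ l := by
  simp [signChangesFrom_cons]

lemma signChangesFrom_le_neg_add_one (σ : SignType) (l : List R) :
    signChangesFrom σ l ≤ signChangesFrom (-σ) l + 1 := by
  induction l generalizing σ with
  | nil => simp
  | cons a l ih =>
    have := ih σ
    rw [signChangesFrom_cons, signChangesFrom_cons, neg_mul, neg_neg]
    generalize σ * SignType.sign a = τ
    rcases τ with _ | _ | _ <;> simp <;> omega

lemma signChangesFrom_cons_le_cons_add_two (σ : SignType) (x y : R) (l : List R) :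
    signChangesFrom σ (x :: l) ≤ signChangesFrom σ (y :: l) + 2 := by
  have h₁ := signChangesFrom_le_neg_add_one σ l
  have h₂ := signChangesFrom_le_neg_add_one (-σ) l
  rw [neg_neg] at h₂
  rw [signChangesFrom_cons, signChangesFrom_cons]
  split_ifs <;> omega

lemma signChangesFrom_set_le_add_two (σ : SignType) (l : List R) (i : ℕ) (x : R) :
    signChangesFrom σ (l.set i x) ≤ signChangesFrom σ l + 2 := by
  induction l generalizing σ i with
  | nil => simp
  | cons a l ih =>
    rcases i with _ | i
    · exact signChangesFrom_cons_le_cons_add_two σ x a l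
    · rw [set_cons_succ, signChangesFrom_cons, signChangesFrom_cons]
      split_ifs
      · exact Nat.add_le_add_right (ih _ i) 1
      · exact ih σ i

lemma length_destutter'_filter_map_sign {σ : SignType} (hσ : σ ≠ 0) (l : List R) :
    (((l.map SignType.sign).filter (· ≠ 0)).destutter' (· ≠ ·) σ).length =
      signChangesFrom σ l + 1 := by
  induction l generalizing σ with
  | nil => simp
  | cons a l ih =>
    rw [map_cons, signChangesFrom_cons]
    rcases hs : SignType.sign a with _ | _ | _ <;> rcases σ with _ | _ | _ <;> simp_all

/-- Read from the wrong initial sign, the first nonzero entry costs one extra change. -/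
def signChanges (l : List R) : ℕ := min (signChangesFrom 1 l) (signChangesFrom (-1) l)

lemma length_destutter_filter_map_sign_sub_one (l : List R) :
    (((l.map SignType.sign).filter (· ≠ 0)).destutter (· ≠ ·)).length - 1 = signChanges l := by
  induction l with
  | nil => simp [signChanges]
  | cons a l ih =>
    rw [map_cons, signChanges, signChangesFrom_cons, signChangesFrom_cons]
    rcases hs : SignType.sign a with _ | _ | _
    · simpa [signChanges] using ih
    · have := length_destutter'_filter_map_sign (σ := -1) (by decide) l
      have := signChangesFrom_le_neg_add_one (-1) l
      simp_all [destutter_cons']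
    · have := length_destutter'_filter_map_sign (σ := 1) (by decide) l
      have := signChangesFrom_le_neg_add_one 1 l
      simp_all [destutter_cons']

@[simp] lemma signChanges_cons_zero (l : List R) : signChanges (0 :: l) = signChanges l := by
  simp [signChanges]

lemma signChanges_set_le_add_two (l : List R) (i : ℕ) (x : R) :
    signChanges (l.set i x) ≤ signChanges l + 2 := by
  have h₁ := signChangesFrom_set_le_add_two 1 l i x
  have h₂ := signChangesFrom_set_le_add_two (-1) l i x
  simp only [signChanges]
  omega

end LinearOrder

section Ring
variable {R : Type*} [Ring R]

/-- If `l` is the top-down coefficient list of `P` and `prev` the coefficient above it, this is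
the top-down coefficient list of `(X + C c) * P`. -/
def mulXAddC (c : R) : R → List R → List R
  | prev, [] => [c * prev]
  | prev, a :: l => (a + c * prev) :: mulXAddC c a l

variable [LinearOrder R] [IsStrictOrderedRing R]

lemma mul_sign_add_mul_ne_neg_one {σ : SignType} {a b c : R} (hc : 0 < c)
    (ha : σ * SignType.sign a ≠ -1) (hb : σ * SignType.sign b ≠ -1) :
    σ * SignType.sign (a + c * b) ≠ -1 := by
  rcases σ with _ | _ | _ <;> simp_all [sign_eq_one_iff, sign_eq_neg_one_iff]
  · exact add_nonpos ha (mul_nonpos_of_nonneg_of_nonpos hc.le hb)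
  · exact add_nonneg ha (mul_nonneg hc.le hb)

lemma signChangesFrom_mulXAddC_le {c : R} (hc : 0 < c) (l : List R) {σ : SignType} {prev : R}
    (hprev : σ * SignType.sign prev ≠ -1) :
    signChangesFrom σ (mulXAddC c prev l) ≤ signChangesFrom σ l := by
  induction l generalizing σ prev with
  | nil => simpa [mulXAddC, signChangesFrom_cons, sign_mul, sign_pos hc] using hprev
  | cons a l ih =>
    rw [mulXAddC, signChangesFrom_cons, signChangesFrom_cons]
    by_cases ha : σ * SignType.sign a = -1
    · have h₁ := ih (σ := -σ) (prev := a) (by simp [neg_mul, ha])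
      have h₂ := signChangesFrom_le_neg_add_one σ (mulXAddC c a l)
      split_ifs <;> omega
    · rw [if_neg (mul_sign_add_mul_ne_neg_one hc ha hprev), if_neg ha]
      exact ih ha

lemma signChanges_mulXAddC_le {c : R} (hc : 0 < c) (l : List R) :
    signChanges (mulXAddC c 0 l) ≤ signChanges l :=
  min_le_min (signChangesFrom_mulXAddC_le hc l (by simp))
    (signChangesFrom_mulXAddC_le hc l (by simp))

end Ring

end List

namespace Polynomial

section Semiring
variable {R : Type*} [Semiring R]

def truncCoeffList (n : ℕ) (P : R[X]) : List R := (List.range n).reverse.map P.coeff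

lemma truncCoeffList_succ (n : ℕ) (P : R[X]) :
    truncCoeffList (n + 1) P = P.coeff n :: truncCoeffList n P := by
  simp [truncCoeffList, List.range_succ]

lemma truncCoeffList_add_monomial {m n : ℕ} (hm : m < n) (P : R[X]) (c : R) :
    truncCoeffList n (P + monomial m c) =
      (truncCoeffList n P).set (n - 1 - m) (P.coeff m + c) := by
  refine List.ext_getElem (by simp [truncCoeffList]) fun j hj _ => ?_
  have hjn : j < n := by simpa [truncCoeffList] using hj
  simp only [truncCoeffList, List.getElem_set, List.getElem_map, List.getElem_reverse,
    List.getElem_range, List.length_range, coeff_add, coeff_monomial]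
  by_cases h : n - 1 - m = j
  · rw [if_pos h, if_pos (by omega), show n - 1 - j = m by omega]
  · rw [if_neg h, if_neg (by omega), add_zero]

variable [LinearOrder R]

lemma signVariations_eq_signChanges_truncCoeffList {P : R[X]} {n : ℕ} (h : P.natDegree < n) :
    P.signVariations = (truncCoeffList n P).signChanges := by
  induction n, h using Nat.le_induction with
  | base =>
    by_cases hP : P = 0
    · subst hP
      simp [truncCoeffList, List.signChanges, List.signChangesFrom_cons]
    · rw [signVariations, List.length_destutter_filter_map_sign_sub_one, coeffList,
        withBotSucc_degree_eq_natDegree_add_one hP]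
      rfl
  | succ n hn ih =>
    rw [truncCoeffList_succ, coeff_eq_zero_of_natDegree_lt hn, List.signChanges_cons_zero, ih]

theorem signVariations_add_monomial_le (P : R[X]) (m : ℕ) (c : R) :
    (P + monomial m c).signVariations ≤ P.signVariations + 2 := by
  set n := max P.natDegree m + 1
  have hdeg : (P + monomial m c).natDegree < n :=
    (natDegree_add_le _ _).trans_lt
      (max_lt (by omega) ((natDegree_monomial_le c).trans_lt (by omega)))
  rw [signVariations_eq_signChanges_truncCoeffList hdeg, truncCoeffList_add_monomial (by omega),
    signVariations_eq_signChanges_truncCoeffList (by omega : P.natDegree < n)]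
  exact List.signChanges_set_le_add_two _ _ _

end Semiring

section Ring
variable {R : Type*} [Ring R]

lemma mulXAddC_truncCoeffList (c : R) (P : R[X]) (n : ℕ) :
    List.mulXAddC c (P.coeff n) (truncCoeffList n P) =
      truncCoeffList (n + 1) ((X + C c) * P) := by
  induction n with
  | zero => simp [truncCoeffList, List.mulXAddC, add_mul]
  | succ n ih =>
    rw [truncCoeffList_succ n P, List.mulXAddC, ih, truncCoeffList_succ (n + 1)]
    simp [add_mul, coeff_X_mul, coeff_C_mul]

variable [LinearOrder R] [IsStrictOrderedRing R]

theorem signVariations_X_add_C_mul_le {c : R} (hc : 0 < c) (P : R[X]) :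
    ((X + C c) * P).signVariations ≤ P.signVariations := by
  have hdeg : ((X + C c) * P).natDegree < P.natDegree + 2 := by
    have := natDegree_mul_le (p := X + C c) (q := P)
    rw [natDegree_X_add_C] at this
    omega
  rw [signVariations_eq_signChanges_truncCoeffList hdeg, ← mulXAddC_truncCoeffList,
    coeff_eq_zero_of_natDegree_lt (Nat.lt_succ_self _),
    signVariations_eq_signChanges_truncCoeffList (Nat.lt_succ_self _)]
  exact List.signChanges_mulXAddC_le hc _

theorem signVariations_X_add_C_pow_mul_le {c : R} (hc : 0 < c) (k : ℕ) (P : R[X]) :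
    ((X + C c) ^ k * P).signVariations ≤ P.signVariations := by
  induction k with
  | zero => simp
  | succ k ih =>
    rw [pow_succ', mul_assoc]
    exact (signVariations_X_add_C_mul_le hc _).trans ih

end Ring

theorem signVariations_sum_C_mul_X_pow_mul_X_add_C_pow_le {R ι : Type*} [CommRing R]
    [LinearOrder R] [IsStrictOrderedRing R] [DecidableEq ι] {s : Finset ι} (hs : s.Nonempty)
    (c : ι → R) (a b : ι → ℕ) {d : R} (hd : 0 < d) :
    (∑ i ∈ s, C (c i) * X ^ a i * (X + C d) ^ b i).signVariations ≤ 2 * s.card - 2 := by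
  induction s using Finset.strongInduction generalizing b with
  | H s ih =>
  obtain ⟨i₀, hi₀, hmin⟩ := s.exists_min_image b hs
  have hfactor : ∑ i ∈ s, C (c i) * X ^ a i * (X + C d) ^ b i = (X + C d) ^ b i₀ *
      (∑ i ∈ s.erase i₀, C (c i) * X ^ a i * (X + C d) ^ (b i - b i₀) +
        monomial (a i₀) (c i₀)) := by
    rw [← Finset.add_sum_erase s _ hi₀, mul_add, Finset.mul_sum, add_comm,
      ← C_mul_X_pow_eq_monomial]
    congr 1
    · refine Finset.sum_congr rfl fun i hi => ?_
      obtain ⟨k, hk⟩ := Nat.exists_eq_add_of_le (hmin i (Finset.mem_of_mem_erase hi))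
      rw [hk, Nat.add_sub_cancel_left, pow_add]
      ring
    · ring
  rw [hfactor]
  refine (signVariations_X_add_C_pow_mul_le hd _ _).trans ?_
  rcases (s.erase i₀).eq_empty_or_nonempty with he | he
  · simp [he]
  · have h₁ := ih _ (Finset.erase_ssubset hi₀) he (fun i => b i - b i₀)
    have h₂ := signVariations_add_monomial_le
      (∑ i ∈ s.erase i₀, C (c i) * X ^ a i * (X + C d) ^ (b i - b i₀)) (a i₀) (c i₀)
    have h₃ := Finset.card_erase_add_one hi₀
    have h₄ := he.card_pos
    omega

end Polynomial

open Polynomial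

theorem MvPolynomial.aeval_fin_two_eq_sum {R : Type*} [CommSemiring R]
    (f : MvPolynomial (Fin 2) R) (p q : R[X]) :
    aeval ![p, q] f = ∑ m ∈ f.support, Polynomial.C (f.coeff m) * p ^ m 0 * q ^ m 1 := by
  simp [aeval_def, eval₂_eq', Fin.prod_univ_two, mul_assoc]

/-- If `f` is a real bivariate polynomial with at most `t` nonzero terms, then
`g(x) = f(x, x+1)` is either identically zero or has at most `2t - 2` positive
real roots counted with multiplicity. -/
theorem pos_roots_subst_le (f : MvPolynomial (Fin 2) ℝ) (t : ℕ)
    (ht : f.support.card ≤ t) :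
    (MvPolynomial.aeval ![X, X + 1] f : Polynomial ℝ) = 0 ∨
    (((MvPolynomial.aeval ![X, X + 1] f : Polynomial ℝ).roots.filter
        (fun r => 0 < r)).card : ℤ) ≤ 2 * t - 2 := by
  set g : ℝ[X] := MvPolynomial.aeval ![X, X + 1] f
  refine or_iff_not_imp_left.2 fun hg => ?_
  have hf : f.support.Nonempty := by
    rw [MvPolynomial.support_nonempty]
    rintro rfl
    exact hg (map_zero _)
  have hroots : (g.roots.filter (0 < ·)).card ≤ g.signVariations :=
    Multiset.countP_eq_card_filter (0 < ·) g.roots ▸ roots_countP_pos_le_signVariations g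
  have hsign : g.signVariations ≤ 2 * f.support.card - 2 := by
    have := signVariations_sum_C_mul_X_pow_mul_X_add_C_pow_le hf (f.coeff ·) (· 0) (· 1) one_pos
    rwa [map_one, ← MvPolynomial.aeval_fin_two_eq_sum] at this
  have := hf.card_pos
  omega
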